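/- Under Assumption 2, for every x ∈ 𝒳, every pair t₁, t₀ ∈ 𝒯 and every y ∈ 𝒴 such that P(X=x, T=t₁, R^X=1, R^T=1) > 0, P(X=x, T=t₀, R^X=1, R^T=1) > 0, P(X=x, Y=y, R^X=1, R^T=1) > 0, and P(R^Y=1 | X=x, Y=y, R^X=1, R^T=1) > 0, the following difference identity holds: P(Y=y | X=x, T=t₁) − P(Y=y | X=x, T=t₀) = [P(Y=y, R^Y=1 | X=x, T=t₁, R^X=1, R^T=1) − P(Y=y, R^Y=1 | X=x, T=t₀, R^X=1, R^T=1)] / P(R^Y=1 | X=x, Y=y, R^X=1, R^T=1). -/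

import Mathlib

open scoped Classical
noncomputable section

namespace CATEMNAR

variable {Ω : Type*} [Fintype Ω]

/-- Probability of the event `E` under the pmf `p` on the finite space `Ω`. -/
def Pr (p : Ω → ℝ) (E : Ω → Prop) : ℝ := ∑ ω, if E ω then p ω else 0

/-- Conditional probability `P(E | C)` (junk value `0` when `P(C) = 0`). -/
def CPr (p : Ω → ℝ) (E C : Ω → Prop) : ℝ := Pr p (fun ω => E ω ∧ C ω) / Pr p C

/-- Conditional independence `A ⫫ B | C` under `p`: for all values `a, b, c` with
`P(C = c) > 0`, `P(A = a, B = b | C = c) = P(A = a | C = c) * P(B = b | C = c)`. -/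
def CondIndep {α β γ : Type*} (p : Ω → ℝ) (A : Ω → α) (B : Ω → β) (C : Ω → γ) : Prop :=
  ∀ (a : α) (b : β) (c : γ), 0 < Pr p (fun ω => C ω = c) →
    CPr p (fun ω => A ω = a ∧ B ω = b) (fun ω => C ω = c) =
      CPr p (fun ω => A ω = a) (fun ω => C ω = c) *
        CPr p (fun ω => B ω = b) (fun ω => C ω = c)

lemma Pr_nonneg (p : Ω → ℝ) (hp0 : ∀ ω, 0 ≤ p ω) (E : Ω → Prop) : 0 ≤ Pr p E := by
  unfold Pr
  apply Finset.sum_nonneg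
  intro ω _
  split_ifs
  · exact hp0 ω
  · exact le_rfl

lemma Pr_congr (p : Ω → ℝ) (E F : Ω → Prop) (h : ∀ ω, E ω ↔ F ω) : Pr p E = Pr p F := by
  unfold Pr
  apply Finset.sum_congr rfl
  intro ω _
  simp [h ω]

lemma Pr_mono (p : Ω → ℝ) (hp0 : ∀ ω, 0 ≤ p ω) (E F : Ω → Prop) (h : ∀ ω, E ω → F ω) :
    Pr p E ≤ Pr p F := by
  unfold Pr
  apply Finset.sum_le_sum
  intro ω _
  split_ifs with h1 h2
  · exact le_rfl
  · exact absurd (h ω h1) h2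
  · exact hp0 ω
  · exact le_rfl

lemma CPr_congr (p : Ω → ℝ) (E E' C C' : Ω → Prop) (hE : ∀ ω, E ω ↔ E' ω)
    (hC : ∀ ω, C ω ↔ C' ω) : CPr p E C = CPr p E' C' := by
  unfold CPr
  rw [Pr_congr p _ _ (fun ω => and_congr (hE ω) (hC ω)), Pr_congr p _ _ hC]

lemma CondIndep.symm {α β γ : Type*} {p : Ω → ℝ} {A : Ω → α} {B : Ω → β} {C : Ω → γ}
    (h : CondIndep p A B C) : CondIndep p B A C := by
  intro b a c hc
  rw [CPr_congr p _ (fun ω => A ω = a ∧ B ω = b) _ (fun ω => C ω = c)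
    (fun ω => and_comm) (fun ω => Iff.rfl), h a b c hc, mul_comm]

/-- `P(A = a | C = c, B = b) = P(A = a | C = c)` under conditional independence. -/
lemma CondIndep.drop {α β γ : Type*} {p : Ω → ℝ} (hp0 : ∀ ω, 0 ≤ p ω)
    {A : Ω → α} {B : Ω → β} {C : Ω → γ} (h : CondIndep p A B C)
    (a : α) (b : β) (c : γ) (hpos : 0 < Pr p (fun ω => C ω = c ∧ B ω = b)) :
    CPr p (fun ω => A ω = a) (fun ω => C ω = c ∧ B ω = b) =
      CPr p (fun ω => A ω = a) (fun ω => C ω = c) := by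
  have hC : 0 < Pr p (fun ω => C ω = c) :=
    lt_of_lt_of_le hpos (Pr_mono p hp0 _ _ (fun ω hh => hh.1))
  have key := h a b c hC
  unfold CPr at key ⊢
  rw [Pr_congr p (fun ω => B ω = b ∧ C ω = c) (fun ω => C ω = c ∧ B ω = b)
    (fun ω => and_comm)] at key
  rw [Pr_congr p (fun ω => (A ω = a ∧ B ω = b) ∧ C ω = c)
    (fun ω => A ω = a ∧ C ω = c ∧ B ω = b) (fun ω => by tauto)] at key
  have h1 : Pr p (fun ω => A ω = a ∧ C ω = c ∧ B ω = b) =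
      Pr p (fun ω => A ω = a ∧ C ω = c) * Pr p (fun ω => C ω = c ∧ B ω = b) /
        Pr p (fun ω => C ω = c) := by
    field_simp at key
    field_simp
    apply mul_right_cancel₀ hC.ne'
    linear_combination (Pr p (fun ω => C ω = c)) * key
  rw [h1]
  field_simp

/-- Under Assumption 2, the difference identity holds:
`P(Y=y | X=x, T=t₁) − P(Y=y | X=x, T=t₀)
  = [P(Y=y, R^Y=1 | X=x, T=t₁, R^X=1, R^T=1) − P(Y=y, R^Y=1 | X=x, T=t₀, R^X=1, R^T=1)]
      / P(R^Y=1 | X=x, Y=y, R^X=1, R^T=1)`. -/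
theorem stmt_6 {𝒳 𝒯 𝒴 : Type*} [Fintype 𝒳] [Fintype 𝒯] [Fintype 𝒴]
    (p : Ω → ℝ) (hp0 : ∀ ω, 0 ≤ p ω) (hp1 : ∑ ω, p ω = 1)
    (X : Ω → 𝒳) (T : Ω → 𝒯) (Y : Ω → 𝒴) (RX RT RY : Ω → Bool)
    (hRX : CondIndep p RX Y (fun ω => (X ω, T ω)))
    (hRT : CondIndep p RT Y (fun ω => (X ω, T ω, RX ω)))
    (hRY : CondIndep p RY T (fun ω => (X ω, Y ω, RX ω, RT ω)))
    (x : 𝒳) (t₁ t₀ : 𝒯) (y : 𝒴)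
    (hpos1 : 0 < Pr p (fun ω => X ω = x ∧ T ω = t₁ ∧ RX ω = true ∧ RT ω = true))
    (hpos0 : 0 < Pr p (fun ω => X ω = x ∧ T ω = t₀ ∧ RX ω = true ∧ RT ω = true))
    (hpos2 : 0 < Pr p (fun ω => X ω = x ∧ Y ω = y ∧ RX ω = true ∧ RT ω = true))
    (hpos3 : 0 < CPr p (fun ω => RY ω = true)
      (fun ω => X ω = x ∧ Y ω = y ∧ RX ω = true ∧ RT ω = true)) :
    CPr p (fun ω => Y ω = y) (fun ω => X ω = x ∧ T ω = t₁) -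
        CPr p (fun ω => Y ω = y) (fun ω => X ω = x ∧ T ω = t₀) =
      (CPr p (fun ω => Y ω = y ∧ RY ω = true)
          (fun ω => X ω = x ∧ T ω = t₁ ∧ RX ω = true ∧ RT ω = true) -
        CPr p (fun ω => Y ω = y ∧ RY ω = true)
          (fun ω => X ω = x ∧ T ω = t₀ ∧ RX ω = true ∧ RT ω = true)) /
        CPr p (fun ω => RY ω = true)
          (fun ω => X ω = x ∧ Y ω = y ∧ RX ω = true ∧ RT ω = true) := by
  set c : ℝ := CPr p (fun ω => RY ω = true)
      (fun ω => X ω = x ∧ Y ω = y ∧ RX ω = true ∧ RT ω = true) with hc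
  have main : ∀ t : 𝒯,
      0 < Pr p (fun ω => X ω = x ∧ T ω = t ∧ RX ω = true ∧ RT ω = true) →
      CPr p (fun ω => Y ω = y) (fun ω => X ω = x ∧ T ω = t) =
        CPr p (fun ω => Y ω = y)
          (fun ω => X ω = x ∧ T ω = t ∧ RX ω = true ∧ RT ω = true) ∧
      CPr p (fun ω => Y ω = y ∧ RY ω = true)
          (fun ω => X ω = x ∧ T ω = t ∧ RX ω = true ∧ RT ω = true) =
        c * CPr p (fun ω => Y ω = y)
          (fun ω => X ω = x ∧ T ω = t ∧ RX ω = true ∧ RT ω = true) := by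
    intro t hpos
    constructor
    · -- Step 1 and 2: drop RX then RT conditioning
      have hXT_RX : 0 < Pr p (fun ω => (X ω, T ω) = (x, t) ∧ RX ω = true) := by
        refine lt_of_lt_of_le hpos (Pr_mono p hp0 _ _ ?_)
        rintro ω ⟨h1, h2, h3, h4⟩
        exact ⟨by simp [h1, h2], h3⟩
      have d1 := (hRX.symm).drop hp0 y true (x, t) hXT_RX
      have hXTRX_RT : 0 < Pr p (fun ω => (X ω, T ω, RX ω) = (x, t, true) ∧ RT ω = true) := by
        refine lt_of_lt_of_le hpos (Pr_mono p hp0 _ _ ?_)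
        rintro ω ⟨h1, h2, h3, h4⟩
        exact ⟨by simp [h1, h2, h3], h4⟩
      have d2 := (hRT.symm).drop hp0 y true (x, t, true) hXTRX_RT
      calc CPr p (fun ω => Y ω = y) (fun ω => X ω = x ∧ T ω = t)
          = CPr p (fun ω => Y ω = y) (fun ω => (X ω, T ω) = (x, t)) := by
            exact CPr_congr p _ _ _ _ (fun ω => Iff.rfl) (fun ω => by simp)
        _ = CPr p (fun ω => Y ω = y) (fun ω => (X ω, T ω) = (x, t) ∧ RX ω = true) := d1.symm
        _ = CPr p (fun ω => Y ω = y) (fun ω => (X ω, T ω, RX ω) = (x, t, true)) := by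
            exact CPr_congr p _ _ _ _ (fun ω => Iff.rfl) (fun ω => by simp [and_assoc])
        _ = CPr p (fun ω => Y ω = y)
              (fun ω => (X ω, T ω, RX ω) = (x, t, true) ∧ RT ω = true) := d2.symm
        _ = CPr p (fun ω => Y ω = y)
              (fun ω => X ω = x ∧ T ω = t ∧ RX ω = true ∧ RT ω = true) := by
            exact CPr_congr p _ _ _ _ (fun ω => Iff.rfl) (fun ω => by simp [and_assoc])
    · -- Step 3: factor out the response probability c
      set N : ℝ := Pr p (fun ω => Y ω = y ∧ X ω = x ∧ T ω = t ∧ RX ω = true ∧ RT ω = true)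
        with hN
      have hNnonneg : 0 ≤ N := Pr_nonneg p hp0 _
      have hnum : CPr p (fun ω => Y ω = y)
          (fun ω => X ω = x ∧ T ω = t ∧ RX ω = true ∧ RT ω = true) =
          N / Pr p (fun ω => X ω = x ∧ T ω = t ∧ RX ω = true ∧ RT ω = true) := rfl
      rcases eq_or_lt_of_le hNnonneg with hN0 | hNpos
      · -- degenerate case: P(Y = y, E_t) = 0
        have hsub : Pr p (fun ω => (Y ω = y ∧ RY ω = true) ∧
            X ω = x ∧ T ω = t ∧ RX ω = true ∧ RT ω = true) = 0 := by
          refine le_antisymm ?_ (Pr_nonneg p hp0 _)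
          rw [hN0]
          exact Pr_mono p hp0 _ _ (fun ω h => ⟨h.1.1, h.2⟩)
        unfold CPr
        rw [hsub, zero_div]
        have : Pr p (fun ω => Y ω = y ∧ X ω = x ∧ T ω = t ∧ RX ω = true ∧ RT ω = true)
            = 0 := hN0.symm
        rw [this, zero_div, mul_zero]
      · -- main case
        have hCT : 0 < Pr p (fun ω => (X ω, Y ω, RX ω, RT ω) = (x, y, true, true) ∧
            T ω = t) := by
          rw [Pr_congr p _ (fun ω => Y ω = y ∧ X ω = x ∧ T ω = t ∧ RX ω = true ∧ RT ω = true)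
            (fun ω => by simp; tauto)]
          exact hNpos
        have d3 := hRY.drop hp0 true t (x, y, true, true) hCT
        have hcval : CPr p (fun ω => RY ω = true)
            (fun ω => (X ω, Y ω, RX ω, RT ω) = (x, y, true, true)) = c := by
          rw [hc]
          exact CPr_congr p _ _ _ _ (fun ω => Iff.rfl) (fun ω => by simp [and_assoc])
        rw [hcval] at d3
        have hCTval : Pr p (fun ω => (X ω, Y ω, RX ω, RT ω) = (x, y, true, true) ∧ T ω = t)
            = N := by
          rw [hN]
          exact Pr_congr p _ _ (fun ω => by simp; tauto)
        have hkey : Pr p (fun ω => (Y ω = y ∧ RY ω = true) ∧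
            X ω = x ∧ T ω = t ∧ RX ω = true ∧ RT ω = true) = c * N := by
          have : Pr p (fun ω => (Y ω = y ∧ RY ω = true) ∧
              X ω = x ∧ T ω = t ∧ RX ω = true ∧ RT ω = true) =
              Pr p (fun ω => RY ω = true ∧
                ((X ω, Y ω, RX ω, RT ω) = (x, y, true, true) ∧ T ω = t)) :=
            Pr_congr p _ _ (fun ω => by simp; tauto)
          rw [this]
          have hdef := d3.symm
          simp only [CPr] at hdef
          rw [hCTval] at hdef
          rw [eq_div_iff hNpos.ne'] at hdef
          linarith [hdef]
        simp only [CPr]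
        rw [hkey, ← hN, mul_div_assoc]
  obtain ⟨e1, f1⟩ := main t₁ hpos1
  obtain ⟨e0, f0⟩ := main t₀ hpos0
  rw [e1, e0, f1, f0]
  rw [eq_div_iff hpos3.ne']
  ring

end CATEMNAR
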